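/- arXiv:1807.10479 — 8 statements merged into one kernel-verified Lean document; each statement's English description precedes it below -/
import Mathlib

section
/- Let A and B be n×n real symmetric positive-definite matrices and let E = B^{1/2} (B^{-1/2} A B^{-1/2})^{1/2} B^{-1/2}. Then A^{-1} E is a symmetric matrix. -/
open Matrix

/-- With `E = B^{1/2} (B^{-1/2} A B^{-1/2})^{1/2} B^{-1/2}`,
the matrix `A⁻¹ * E` is symmetric. -/
theorem stmt_1 (n : ℕ) (A B sB sC : Matrix (Fin n) (Fin n) ℝ)
    (hA : A.PosDef) (hB : B.PosDef)
    (hsB : sB.PosDef) (hsB2 : sB * sB = B)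
    (hsC : sC.PosDef) (hsC2 : sC * sC = sB⁻¹ * A * sB⁻¹) :
    (A⁻¹ * (sB * sC * sB⁻¹)).IsSymm := by
  have hsBu : IsUnit sB.det := hsB.det_pos.ne'.isUnit
  have hsCu : IsUnit sC.det := hsC.det_pos.ne'.isUnit
  have hBsB : sB * sB⁻¹ = 1 := mul_nonsing_inv sB hsBu
  have hsBB : sB⁻¹ * sB = 1 := nonsing_inv_mul sB hsBu
  have hAeq : A = sB * sC * sC * sB := by
    have : sB * (sC * sC) * sB = A := by
      rw [hsC2]
      calc sB * (sB⁻¹ * A * sB⁻¹) * sB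
          = (sB * sB⁻¹) * A * (sB⁻¹ * sB) := by noncomm_ring
        _ = A := by rw [hBsB, hsBB, one_mul, mul_one]
    rw [← this]; noncomm_ring
  have hkey : A⁻¹ * (sB * sC * sB⁻¹) = sB⁻¹ * sC⁻¹ * sB⁻¹ := by
    rw [hAeq, Matrix.mul_inv_rev, Matrix.mul_inv_rev, Matrix.mul_inv_rev]
    calc sB⁻¹ * (sC⁻¹ * (sC⁻¹ * sB⁻¹)) * (sB * sC * sB⁻¹)
        = sB⁻¹ * sC⁻¹ * sC⁻¹ * (sB⁻¹ * sB) * sC * sB⁻¹ := by noncomm_ring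
      _ = sB⁻¹ * sC⁻¹ * (sC⁻¹ * sC) * sB⁻¹ := by rw [hsBB]; noncomm_ring
      _ = sB⁻¹ * sC⁻¹ * sB⁻¹ := by rw [nonsing_inv_mul sC hsCu]; noncomm_ring
  rw [hkey]
  have hsBs : sB⁻¹.IsSymm := by
    rw [Matrix.IsSymm, transpose_nonsing_inv, ← conjTranspose_eq_transpose_of_trivial, hsB.isHermitian.eq]
  have hsCs : sC⁻¹.IsSymm := by
    rw [Matrix.IsSymm, transpose_nonsing_inv, ← conjTranspose_eq_transpose_of_trivial, hsC.isHermitian.eq]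
  rw [Matrix.IsSymm, transpose_mul, transpose_mul, hsBs, hsCs]
  noncomm_ring
end

section
/- Let A and B be n×n real symmetric positive-definite matrices, let E = B^{1/2} (B^{-1/2} A B^{-1/2})^{1/2} B^{-1/2}, and define Γ(S) = E S E^T for symmetric matrices S. Then for any symmetric matrices S₁, S₂, one has tr(Γ(S₁) A^{-1} Γ(S₂) A^{-1}) = tr(S₁ B^{-1} S₂ B^{-1}); i.e., parallel transport preserves the affine-invariant inner product. -/
open Matrix

/-- Parallel transport `Γ(S) = E S Eᵀ`, with
`E = B^{1/2} (B^{-1/2} A B^{-1/2})^{1/2} B^{-1/2}`, preserves the affine-invariant inner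
product: `tr(Γ(S₁) A⁻¹ Γ(S₂) A⁻¹) = tr(S₁ B⁻¹ S₂ B⁻¹)` for symmetric `S₁`, `S₂`. -/
theorem stmt_3 (n : ℕ) (A B sB sC : Matrix (Fin n) (Fin n) ℝ)
    (hA : A.PosDef) (hB : B.PosDef)
    (hsB : sB.PosDef) (hsB2 : sB * sB = B)
    (hsC : sC.PosDef) (hsC2 : sC * sC = sB⁻¹ * A * sB⁻¹)
    (S₁ S₂ : Matrix (Fin n) (Fin n) ℝ) (hS₁ : S₁.IsSymm) (hS₂ : S₂.IsSymm) :
    (((sB * sC * sB⁻¹) * S₁ * (sB * sC * sB⁻¹)ᵀ) * A⁻¹ *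
        ((sB * sC * sB⁻¹) * S₂ * (sB * sC * sB⁻¹)ᵀ) * A⁻¹).trace =
      (S₁ * B⁻¹ * S₂ * B⁻¹).trace := by
  have hBu : IsUnit sB.det := (isUnit_iff_isUnit_det _).1 hsB.isUnit
  have hCu : IsUnit sC.det := (isUnit_iff_isUnit_det _).1 hsC.isUnit
  have hBi : sB⁻¹ * sB = 1 := nonsing_inv_mul _ hBu
  have hBi' : sB * sB⁻¹ = 1 := mul_nonsing_inv _ hBu
  have hCi : sC⁻¹ * sC = 1 := nonsing_inv_mul _ hCu
  have hCi' : sC * sC⁻¹ = 1 := mul_nonsing_inv _ hCu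
  have hBsym : sBᵀ = sB := by
    have := hsB.isHermitian
    rwa [IsHermitian, conjTranspose_eq_transpose_of_trivial] at this
  have hCsym : sCᵀ = sC := by
    have := hsC.isHermitian
    rwa [IsHermitian, conjTranspose_eq_transpose_of_trivial] at this
  have c1 : ∀ X : Matrix (Fin n) (Fin n) ℝ, sB * (sB⁻¹ * X) = X := by
    intro X; rw [← mul_assoc, hBi', one_mul]
  have c2 : ∀ X : Matrix (Fin n) (Fin n) ℝ, sB⁻¹ * (sB * X) = X := by
    intro X; rw [← mul_assoc, hBi, one_mul]
  have c3 : ∀ X : Matrix (Fin n) (Fin n) ℝ, sC * (sC⁻¹ * X) = X := by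
    intro X; rw [← mul_assoc, hCi', one_mul]
  have c4 : ∀ X : Matrix (Fin n) (Fin n) ℝ, sC⁻¹ * (sC * X) = X := by
    intro X; rw [← mul_assoc, hCi, one_mul]
  -- A = sB * sC * sC * sB
  have hAeq : A = sB * (sC * sC) * sB := by
    rw [hsC2]; simp [mul_assoc, c1, c2, hBi, hBi']
  have hAinv : A⁻¹ = sB⁻¹ * (sC⁻¹ * sC⁻¹) * sB⁻¹ := by
    apply inv_eq_right_inv
    rw [hAeq]; simp [mul_assoc, c1, c2, c3, c4, hBi', hCi']
  have hBinv : B⁻¹ = sB⁻¹ * sB⁻¹ := by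
    apply inv_eq_right_inv
    rw [← hsB2]; simp [mul_assoc, c1, hBi']
  have hEt : (sB * sC * sB⁻¹)ᵀ = sB⁻¹ * sC * sB := by
    rw [transpose_mul, transpose_mul, transpose_nonsing_inv, hBsym, hCsym, ← mul_assoc]
  -- key: Eᵀ * A⁻¹ * E = B⁻¹
  have hkey : (sB * sC * sB⁻¹)ᵀ * A⁻¹ * (sB * sC * sB⁻¹) = B⁻¹ := by
    rw [hEt, hAinv, hBinv]; simp [mul_assoc, c1, c2, c3, c4]
  calc (((sB * sC * sB⁻¹) * S₁ * (sB * sC * sB⁻¹)ᵀ) * A⁻¹ *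
        ((sB * sC * sB⁻¹) * S₂ * (sB * sC * sB⁻¹)ᵀ) * A⁻¹).trace
      = ((sB * sC * sB⁻¹) * (S₁ * ((sB * sC * sB⁻¹)ᵀ * A⁻¹ * (sB * sC * sB⁻¹)) * S₂ *
          ((sB * sC * sB⁻¹)ᵀ * A⁻¹))).trace := by
        congr 1; noncomm_ring
    _ = ((S₁ * ((sB * sC * sB⁻¹)ᵀ * A⁻¹ * (sB * sC * sB⁻¹)) * S₂ *
          ((sB * sC * sB⁻¹)ᵀ * A⁻¹)) * (sB * sC * sB⁻¹)).trace := trace_mul_comm _ _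
    _ = (S₁ * B⁻¹ * S₂ * B⁻¹).trace := by
        rw [hkey]; congr 1
        calc S₁ * B⁻¹ * S₂ * ((sB * sC * sB⁻¹)ᵀ * A⁻¹) * (sB * sC * sB⁻¹)
            = S₁ * B⁻¹ * S₂ * ((sB * sC * sB⁻¹)ᵀ * A⁻¹ * (sB * sC * sB⁻¹)) := by
              noncomm_ring
          _ = S₁ * B⁻¹ * S₂ * B⁻¹ := by rw [hkey]
end

section
/- Let A and B be n×n real symmetric positive-definite matrices, and let φ(t) = B^{1/2} (B^{-1/2} A B^{-1/2})^t B^{1/2} be the geodesic from B to A. Then the velocity at t = 1 satisfies φ'(1) = -A^{1/2} log(A^{-1/2} B A^{-1/2}) A^{1/2} = -Log_A(B). -/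
/-!
Put `C = sA⁻¹ sB`. Then `Cᴴ C = sB A⁻¹ sB = exp (-Lc)` and `C Cᴴ = sA⁻¹ B sA⁻¹ = exp L'`, so the
two exponentials are conjugate by `C`. Because `Lc` commutes with `Cᴴ C`, the conjugate
`C (-Lc) C⁻¹` is again symmetric, and the exponential is injective on symmetric matrices;
hence `L' = -C Lc C⁻¹` and `-sA L' sA = sB Lc sB⁻¹ A`, which is also `φ'(1) = sB Lc exp Lc sB`.
-/

open Matrix

attribute [local instance] Matrix.frobeniusNormedRing Matrix.frobeniusNormedAlgebra

namespace Matrix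

variable {n R : Type*} [Fintype n] [DecidableEq n]

theorem IsHermitian.eq_of_exp_eq {𝕜 : Type*} [RCLike 𝕜] {M N : Matrix n n 𝕜}
    (hM : M.IsHermitian) (hN : N.IsHermitian) (h : NormedSpace.exp M = NormedSpace.exp N) :
    M = N := by
  -- The functional-calculus instance does not unify with the Frobenius `NormedRing` by itself.
  have log_exp := @CFC.log_exp (Matrix n n 𝕜) _ _ _ IsHermitian.instContinuousFunctionalCalculus
  exact (log_exp M hM).symm.trans ((congrArg _ h).trans (log_exp N hN))

theorem IsHermitian.conj_of_commute [CommRing R] [StarRing R] {C L : Matrix n n R}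
    (hC : IsUnit C) (hL : L.IsHermitian) (hcomm : Commute L (Cᴴ * C)) :
    (C * L * C⁻¹).IsHermitian := by
  have hCC : C * C⁻¹ = 1 := mul_nonsing_inv _ ((isUnit_iff_isUnit_det C).mp hC)
  have hCC' : C⁻¹ᴴ * Cᴴ = 1 := by rw [← conjTranspose_mul, hCC, conjTranspose_one]
  calc (C * L * C⁻¹)ᴴ = C⁻¹ᴴ * (L * (Cᴴ * C)) * C⁻¹ := by
        simp only [conjTranspose_mul, hL.eq, Matrix.mul_assoc, hCC, Matrix.mul_one]
    _ = C⁻¹ᴴ * ((Cᴴ * C) * L) * C⁻¹ := by rw [hcomm.eq]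
    _ = C * L * C⁻¹ := by
        simp only [← Matrix.mul_assoc, hCC', Matrix.one_mul]

theorem IsHermitian.eq_conj_of_exp_eq {𝕜 : Type*} [RCLike 𝕜] {C M N : Matrix n n 𝕜}
    (hC : IsUnit C) (hM : M.IsHermitian) (hN : N.IsHermitian)
    (hexpM : NormedSpace.exp M = Cᴴ * C) (hexpN : NormedSpace.exp N = C * Cᴴ) :
    N = C * M * C⁻¹ := by
  have hcomm : Commute M (Cᴴ * C) := hexpM ▸ (Commute.refl M).exp_right
  refine hN.eq_of_exp_eq (hM.conj_of_commute hC hcomm) ?_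
  rw [exp_conj _ _ hC, hexpM, hexpN]
  simp [Matrix.mul_assoc, mul_nonsing_inv _ ((isUnit_iff_isUnit_det C).mp hC)]

theorem hasDerivAt_mul_exp_smul_mul {𝕜 : Type*} [RCLike 𝕜] (P L Q : Matrix n n 𝕜) (t : ℝ) :
    HasDerivAt (fun u : ℝ => P * NormedSpace.exp (u • L) * Q)
      (P * (L * NormedSpace.exp (t • L)) * Q) t :=
  ((hasDerivAt_exp_smul_const' L t).const_mul P).mul_const Q

end Matrix

theorem stmt_6_general (n : ℕ) (A B sA sB Lc L' : Matrix (Fin n) (Fin n) ℝ)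
    (hsA : sA.PosDef) (hsA2 : sA * sA = A)
    (hsB : sB.PosDef) (hsB2 : sB * sB = B)
    (hLc : Lc.IsSymm) (hexpC : NormedSpace.exp Lc = sB⁻¹ * A * sB⁻¹)
    (hL' : L'.IsSymm) (hexpL' : NormedSpace.exp L' = sA⁻¹ * B * sA⁻¹) :
    HasDerivAt (fun t : ℝ => sB * NormedSpace.exp (t • Lc) * sB)
      (-(sA * L' * sA)) 1 := by
  have := hsA.isUnit.invertible
  have := hsB.isUnit.invertible
  have hC : IsUnit (sA⁻¹ * sB) := hsA.inv.isUnit.mul hsB.isUnit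
  have hCH : (sA⁻¹ * sB)ᴴ = sB * sA⁻¹ := by
    rw [conjTranspose_mul, conjTranspose_nonsing_inv, hsA.isHermitian.eq, hsB.isHermitian.eq]
  have hL'_eq : L' = (sA⁻¹ * sB) * (-Lc) * (sA⁻¹ * sB)⁻¹ := by
    refine (isHermitian_iff_isSymm.mpr hLc).neg.eq_conj_of_exp_eq hC
      (isHermitian_iff_isSymm.mpr hL') ?_ ?_
    · rw [hCH, exp_neg, hexpC, ← hsA2]
      simp [Matrix.mul_inv_rev, Matrix.mul_assoc]
    · rw [hCH, hexpL', ← hsB2]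
      simp [Matrix.mul_assoc]
  refine (hasDerivAt_mul_exp_smul_mul sB Lc sB 1).congr_deriv ?_
  rw [hL'_eq, one_smul, hexpC, ← hsA2, Matrix.mul_inv_rev]
  simp [Matrix.mul_assoc]

/-- The geodesic `φ(t) = B^{1/2} (B^{-1/2} A B^{-1/2})^t B^{1/2}` from `B` to `A`
has velocity at `t = 1` equal to `-A^{1/2} log (A^{-1/2} B A^{-1/2}) A^{1/2} = -Log_A(B)`. -/
theorem stmt_6 (n : ℕ) (A B sA sB Lc L' : Matrix (Fin n) (Fin n) ℝ)
    (hA : A.PosDef) (hB : B.PosDef)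
    (hsA : sA.PosDef) (hsA2 : sA * sA = A)
    (hsB : sB.PosDef) (hsB2 : sB * sB = B)
    (hLc : Lc.IsSymm) (hexpC : NormedSpace.exp Lc = sB⁻¹ * A * sB⁻¹)
    (hL' : L'.IsSymm) (hexpL' : NormedSpace.exp L' = sA⁻¹ * B * sA⁻¹) :
    HasDerivAt (fun t : ℝ => sB * NormedSpace.exp (t • Lc) * sB)
      (-(sA * L' * sA)) 1 :=
  stmt_6_general n A B sA sB Lc L' hsA hsA2 hsB hsB2 hLc hexpC hL' hexpL'
end

section
/- Let A and B be n×n real symmetric positive-definite matrices and define U = A^{-1/2} B^{1/2} (B^{-1/2} A B^{-1/2})^{1/2}. Then U is an orthogonal matrix, i.e., U U^T = I. -/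
open Matrix

/-- `U = A^{-1/2} B^{1/2} (B^{-1/2} A B^{-1/2})^{1/2}` is an orthogonal matrix. -/
theorem stmt_7 (n : ℕ) (A B sA sB sC : Matrix (Fin n) (Fin n) ℝ)
    (hA : A.PosDef) (hB : B.PosDef)
    (hsA : sA.PosDef) (hsA2 : sA * sA = A)
    (hsB : sB.PosDef) (hsB2 : sB * sB = B)
    (hsC : sC.PosDef) (hsC2 : sC * sC = sB⁻¹ * A * sB⁻¹) :
    (sA⁻¹ * sB * sC) * (sA⁻¹ * sB * sC)ᵀ = 1 := by
  have hAdet : IsUnit sA.det := isUnit_iff_ne_zero.mpr hsA.det_pos.ne'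
  have hBdet : IsUnit sB.det := isUnit_iff_ne_zero.mpr hsB.det_pos.ne'
  have hsAt : sAᵀ = sA := hsA.isHermitian
  have hsBt : sBᵀ = sB := hsB.isHermitian
  have hsCt : sCᵀ = sC := hsC.isHermitian
  have h1 : (sA⁻¹ * sB * sC)ᵀ = sC * sB * sA⁻¹ := by
    simp [transpose_mul, transpose_nonsing_inv, hsAt, hsBt, hsCt, mul_assoc]
  rw [h1]
  have key : sB * (sC * sC) * sB = A := by
    rw [hsC2]
    calc sB * (sB⁻¹ * A * sB⁻¹) * sB
        = (sB * sB⁻¹) * A * (sB⁻¹ * sB) := by simp only [mul_assoc]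
      _ = A := by rw [mul_nonsing_inv _ hBdet, nonsing_inv_mul _ hBdet, one_mul, mul_one]
  calc sA⁻¹ * sB * sC * (sC * sB * sA⁻¹)
      = sA⁻¹ * (sB * (sC * sC) * sB) * sA⁻¹ := by simp only [mul_assoc]
    _ = sA⁻¹ * (sA * sA) * sA⁻¹ := by rw [key, hsA2]
    _ = (sA⁻¹ * sA) * (sA * sA⁻¹) := by simp only [mul_assoc]
    _ = 1 := by rw [nonsing_inv_mul _ hAdet, mul_nonsing_inv _ hAdet, one_mul]
end

section
/- Let A and B be n×n real symmetric positive-definite matrices, and let E = B^{1/2}(B^{-1/2} A B^{-1/2})^{1/2} B^{-1/2}. Then E · (B^{1/2} log(B^{-1/2} A B^{-1/2}) B^{1/2}) · E^T = -A^{1/2} log(A^{-1/2} B A^{-1/2}) A^{1/2}; i.e., parallel transport maps the initial geodesic velocity Log_B(A) to the terminal geodesic velocity -Log_A(B). -/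
/-!
With `C = B^{-1/2} A B^{-1/2}`, the left-hand side collapses to `B^{1/2} (log C) B^{-1/2} A`
because `C^{1/2}` commutes with `log C`. For the right-hand side put `U = A^{-1/2} B^{1/2}`:
then `Uᵀ U = C⁻¹ = exp (-log C)` and `U Uᵀ = A^{-1/2} B A^{-1/2}`. Since `-log C` commutes
with `Uᵀ U`, its conjugate `U (-log C) U⁻¹` is symmetric with exponential `U Uᵀ`, so by
injectivity of `exp` on symmetric matrices it is `log (A^{-1/2} B A^{-1/2})`; unwinding gives
the same matrix.
-/

namespace Matrix

variable {n : Type*} [Fintype n] [DecidableEq n]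

section CommRing

variable {R : Type*} [CommRing R]

theorem isSymm_conj_of_commute_transpose_mul_self {U X : Matrix n n R} (hU : IsUnit U)
    (hX : X.IsSymm) (hcomm : Commute X (Uᵀ * U)) : (U * X * U⁻¹).IsSymm := by
  have := hU.invertible
  calc (U * X * U⁻¹)ᵀ = Uᵀ⁻¹ * (X * (Uᵀ * U)) * U⁻¹ := by
        simp only [transpose_mul, transpose_nonsing_inv, hX.eq, Matrix.mul_assoc,
          mul_inv_of_invertible, Matrix.mul_one]
    _ = Uᵀ⁻¹ * (Uᵀ * U * X) * U⁻¹ := by rw [hcomm.eq]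
    _ = U * X * U⁻¹ := by
        simp only [Matrix.mul_assoc, Matrix.inv_mul_cancel_left_of_invertible]

theorem conj_mul_transpose_conj_eq {S C L : Matrix n n R} (hS : IsUnit S) (hSs : S.IsSymm)
    (hCs : C.IsSymm) (hcomm : Commute C L) :
    (S * C * S⁻¹) * (S * L * S) * (S * C * S⁻¹)ᵀ = S * L * (C * C) * S := by
  have := hS.invertible
  rw [transpose_mul, transpose_mul, transpose_nonsing_inv, hSs.eq, hCs.eq]
  simp only [Matrix.mul_assoc, Matrix.inv_mul_cancel_left_of_invertible,
    Matrix.mul_inv_cancel_left_of_invertible]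
  rw [← Matrix.mul_assoc C L, hcomm.eq, Matrix.mul_assoc]

end CommRing

theorem IsSymm.eq_of_exp_eq_exp {X Y : Matrix n n ℝ} (hX : X.IsSymm) (hY : Y.IsSymm)
    (h : NormedSpace.exp X = NormedSpace.exp Y) : X = Y := by
  open scoped Matrix.Norms.L2Operator in
  rw [← CFC.log_exp X (isHermitian_iff_isSymm.mpr hX), h,
    CFC.log_exp Y (isHermitian_iff_isSymm.mpr hY)]

open scoped MatrixOrder in
theorem PosSemidef.commute_of_commute_mul_self {S L : Matrix n n ℝ} (hS : S.PosSemidef)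
    (h : Commute (S * S) L) : Commute S L := by
  rw [← CFC.sqrt_mul_self S hS.nonneg, CFC.sqrt_eq_cfc]
  exact h.cfc_nnreal _

theorem eq_conj_of_exp_eq_transpose_mul_self {U X Y : Matrix n n ℝ} (hU : IsUnit U)
    (hX : X.IsSymm) (hY : Y.IsSymm) (hexpX : NormedSpace.exp X = Uᵀ * U)
    (hexpY : NormedSpace.exp Y = U * Uᵀ) : Y = U * X * U⁻¹ := by
  have := hU.invertible
  have hcomm : Commute X (Uᵀ * U) := hexpX ▸ (Commute.refl X).exp_right
  refine hY.eq_of_exp_eq_exp (isSymm_conj_of_commute_transpose_mul_self hU hX hcomm) ?_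
  rw [exp_conj _ _ hU, hexpX, hexpY]
  simp only [Matrix.mul_assoc, mul_inv_of_invertible, Matrix.mul_one]

end Matrix

open Matrix

theorem stmt_9_general (n : ℕ) (A B sA sB sC Lc L' : Matrix (Fin n) (Fin n) ℝ)
    (hsA : sA.PosDef) (hsA2 : sA * sA = A)
    (hsB : sB.PosDef) (hsB2 : sB * sB = B)
    (hsC : sC.PosDef) (hsC2 : sC * sC = sB⁻¹ * A * sB⁻¹)
    (hLc : Lc.IsSymm) (hexpC : NormedSpace.exp Lc = sB⁻¹ * A * sB⁻¹)
    (hL' : L'.IsSymm) (hexpL' : NormedSpace.exp L' = sA⁻¹ * B * sA⁻¹) :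
    (sB * sC * sB⁻¹) * (sB * Lc * sB) * (sB * sC * sB⁻¹)ᵀ = -(sA * L' * sA) := by
  have := hsA.isUnit.invertible
  have := hsB.isUnit.invertible
  have hsA_symm : sA.IsSymm := isHermitian_iff_isSymm.mp hsA.isHermitian
  have hsB_symm : sB.IsSymm := isHermitian_iff_isSymm.mp hsB.isHermitian
  have hsC_symm : sC.IsSymm := isHermitian_iff_isSymm.mp hsC.isHermitian
  have hcomm : Commute sC Lc :=
    hsC.posSemidef.commute_of_commute_mul_self (hsC2 ▸ hexpC ▸ (Commute.refl Lc).exp_left)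
  have hL'_eq : L' = (sA⁻¹ * sB) * -Lc * (sA⁻¹ * sB)⁻¹ := by
    have hU : IsUnit (sA⁻¹ * sB) := (isUnit_nonsing_inv_iff.mpr hsA.isUnit).mul hsB.isUnit
    refine eq_conj_of_exp_eq_transpose_mul_self hU hLc.neg hL' ?_ ?_
    · rw [exp_neg, hexpC, ← hsA2]
      simp only [Matrix.mul_assoc, Matrix.mul_inv_rev, inv_inv_of_invertible, transpose_mul,
        hsB_symm.eq, transpose_nonsing_inv, hsA_symm.eq]
    · rw [hexpL', ← hsB2]
      simp only [Matrix.mul_assoc, transpose_mul, hsB_symm.eq, transpose_nonsing_inv,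
        hsA_symm.eq]
  rw [conj_mul_transpose_conj_eq hsB.isUnit hsB_symm hsC_symm hcomm, hsC2, hL'_eq, ← hsA2]
  simp only [Matrix.mul_assoc, inv_mul_of_invertible, Matrix.mul_one, Matrix.mul_neg,
    Matrix.mul_inv_rev, inv_inv_of_invertible, Matrix.neg_mul, mul_inv_cancel_left_of_invertible,
    neg_neg]

/-- With `E = B^{1/2}(B^{-1/2} A B^{-1/2})^{1/2} B^{-1/2}`, parallel transport maps
the initial geodesic velocity `Log_B(A) = B^{1/2} log(B^{-1/2} A B^{-1/2}) B^{1/2}` to the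
terminal velocity `-Log_A(B) = -A^{1/2} log(A^{-1/2} B A^{-1/2}) A^{1/2}`. -/
theorem stmt_9 (n : ℕ) (A B sA sB sC Lc L' : Matrix (Fin n) (Fin n) ℝ)
    (hA : A.PosDef) (hB : B.PosDef)
    (hsA : sA.PosDef) (hsA2 : sA * sA = A)
    (hsB : sB.PosDef) (hsB2 : sB * sB = B)
    (hsC : sC.PosDef) (hsC2 : sC * sC = sB⁻¹ * A * sB⁻¹)
    (hLc : Lc.IsSymm) (hexpC : NormedSpace.exp Lc = sB⁻¹ * A * sB⁻¹)
    (hL' : L'.IsSymm) (hexpL' : NormedSpace.exp L' = sA⁻¹ * B * sA⁻¹) :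
    (sB * sC * sB⁻¹) * (sB * Lc * sB) * (sB * sC * sB⁻¹)ᵀ = -(sA * L' * sA) :=
  stmt_9_general n A B sA sB sC Lc L' hsA hsA2 hsB hsB2 hsC hsC2 hLc hexpC hL' hexpL'
end

section
/- Let A, B, P be n×n real symmetric positive-definite matrices, let S = Log_B(P) = B^{1/2} log(B^{-1/2} P B^{-1/2}) B^{1/2}, and let E = B^{1/2}(B^{-1/2} A B^{-1/2})^{1/2} B^{-1/2}. Then Exp_A(E S E^T) = E P E^T, where Exp_A(S) = A^{1/2} exp(A^{-1/2} S A^{-1/2}) A^{1/2}. -/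
/-!
Put `M = E B^{1/2} = B^{1/2} C` with `C = (B^{-1/2} A B^{-1/2})^{1/2}`. Then `M Mᵀ = A`, so
`U = A^{-1/2} M` is orthogonal and `Exp_A (M Y Mᵀ) = A^{1/2} exp (U Y Uᵀ) A^{1/2} = M exp(Y) Mᵀ`
for every `Y`. Taking `Y = log (B^{-1/2} P B^{-1/2})` gives `E S Eᵀ = M Y Mᵀ` and
`E P Eᵀ = M exp(Y) Mᵀ`.
-/

open Matrix

namespace Matrix

variable {m : Type*} [Fintype m] [DecidableEq m]

theorem inv_mul_mul_transpose_eq_one {R : Type*} [CommRing R] {S M : Matrix m m R}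
    (hS : IsUnit S.det) (hSt : Sᵀ = S) (hM : M * Mᵀ = S * S) : S⁻¹ * M * (S⁻¹ * M)ᵀ = 1 := by
  rw [transpose_mul, transpose_nonsing_inv, hSt, Matrix.mul_assoc, ← Matrix.mul_assoc M, hM]
  simp only [Matrix.mul_assoc, mul_nonsing_inv _ hS, Matrix.mul_one, nonsing_inv_mul _ hS]

variable {𝔸 : Type*} [NormedCommRing 𝔸] [NormedAlgebra ℚ 𝔸] [CompleteSpace 𝔸]

/-- `Exp_A X = A^{1/2} exp(A^{-1/2} X A^{-1/2}) A^{1/2}`, written in terms of `S = A^{1/2}`. -/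
noncomputable def affineInvariantExp (S X : Matrix m m 𝔸) : Matrix m m 𝔸 :=
  S * NormedSpace.exp (S⁻¹ * X * S⁻¹) * S

theorem exp_conj_of_mul_transpose_eq_one {U : Matrix m m 𝔸} (hU : U * Uᵀ = 1)
    (Y : Matrix m m 𝔸) :
    NormedSpace.exp (U * Y * Uᵀ) = U * NormedSpace.exp Y * Uᵀ := by
  rw [← inv_eq_right_inv hU]
  exact exp_conj U Y ((isUnit_iff_isUnit_det U).2 (isUnit_det_of_right_inverse hU))

theorem affineInvariantExp_congr {S M : Matrix m m 𝔸} (hS : IsUnit S.det) (hSt : Sᵀ = S)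
    (hM : M * Mᵀ = S * S) (Y : Matrix m m 𝔸) :
    affineInvariantExp S (M * Y * Mᵀ) = M * NormedSpace.exp Y * Mᵀ := by
  have hSMt : (S⁻¹ * M)ᵀ = Mᵀ * S⁻¹ := by rw [transpose_mul, transpose_nonsing_inv, hSt]
  have harg : S⁻¹ * (M * Y * Mᵀ) * S⁻¹ = S⁻¹ * M * Y * (S⁻¹ * M)ᵀ := by
    rw [hSMt]
    simp only [Matrix.mul_assoc]
  rw [affineInvariantExp, harg,
    exp_conj_of_mul_transpose_eq_one (inv_mul_mul_transpose_eq_one hS hSt hM), hSMt]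
  simp only [Matrix.mul_assoc, mul_nonsing_inv_cancel_left _ _ hS, nonsing_inv_mul _ hS,
    Matrix.mul_one]

end Matrix

theorem stmt_10_general (n : ℕ) (A P sA sB sC Lp : Matrix (Fin n) (Fin n) ℝ)
    (hsA : sA.PosDef) (hsA2 : sA * sA = A)
    (hsB : sB.PosDef)
    (hsC : sC.PosDef) (hsC2 : sC * sC = sB⁻¹ * A * sB⁻¹)
    (hexpP : NormedSpace.exp Lp = sB⁻¹ * P * sB⁻¹) :
    sA * NormedSpace.exp
        (sA⁻¹ * ((sB * sC * sB⁻¹) * (sB * Lp * sB) * (sB * sC * sB⁻¹)ᵀ) * sA⁻¹) * sA =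
      (sB * sC * sB⁻¹) * P * (sB * sC * sB⁻¹)ᵀ := by
  set E := sB * sC * sB⁻¹
  have hsBt : sBᵀ = sB := hsB.1
  have hsCt : sCᵀ = sC := hsC.1
  have hsBdet : IsUnit sB.det := (isUnit_iff_isUnit_det sB).1 hsB.isUnit
  have hEsB : E * sB = sB * sC := nonsing_inv_mul_cancel_right _ _ hsBdet
  have hM : E * sB * (E * sB)ᵀ = sA * sA := by
    rw [hEsB, transpose_mul, hsCt, hsBt, hsA2, Matrix.mul_assoc, ← Matrix.mul_assoc sC, hsC2]
    simp only [Matrix.mul_assoc, mul_nonsing_inv_cancel_left _ _ hsBdet, nonsing_inv_mul _ hsBdet,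
      Matrix.mul_one]
  have hlhs : E * (sB * Lp * sB) * Eᵀ = E * sB * Lp * (E * sB)ᵀ := by
    rw [Matrix.transpose_mul E sB, hsBt]
    simp only [Matrix.mul_assoc]
  have hrhs : E * P * Eᵀ = E * sB * NormedSpace.exp Lp * (E * sB)ᵀ := by
    rw [hexpP, Matrix.transpose_mul E sB, hsBt]
    simp only [Matrix.mul_assoc, mul_nonsing_inv_cancel_left _ _ hsBdet,
      nonsing_inv_mul_cancel_left _ _ hsBdet]
  rw [hlhs, hrhs]
  exact affineInvariantExp_congr ((isUnit_iff_isUnit_det sA).1 hsA.isUnit) hsA.1 hM Lp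

/-- With `S = Log_B(P) = B^{1/2} log(B^{-1/2} P B^{-1/2}) B^{1/2}` and
`E = B^{1/2}(B^{-1/2} A B^{-1/2})^{1/2} B^{-1/2}`, one has `Exp_A(E S Eᵀ) = E P Eᵀ`,
where `Exp_A(S) = A^{1/2} exp(A^{-1/2} S A^{-1/2}) A^{1/2}`. -/
theorem stmt_10 (n : ℕ) (A B P sA sB sC Lp : Matrix (Fin n) (Fin n) ℝ)
    (hA : A.PosDef) (hB : B.PosDef) (hP : P.PosDef)
    (hsA : sA.PosDef) (hsA2 : sA * sA = A)
    (hsB : sB.PosDef) (hsB2 : sB * sB = B)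
    (hsC : sC.PosDef) (hsC2 : sC * sC = sB⁻¹ * A * sB⁻¹)
    (hLp : Lp.IsSymm) (hexpP : NormedSpace.exp Lp = sB⁻¹ * P * sB⁻¹) :
    sA * NormedSpace.exp
        (sA⁻¹ * ((sB * sC * sB⁻¹) * (sB * Lp * sB) * (sB * sC * sB⁻¹)ᵀ) * sA⁻¹) * sA =
      (sB * sC * sB⁻¹) * P * (sB * sC * sB⁻¹)ᵀ :=
  stmt_10_general n A P sA sB sC Lp hsA hsA2 hsB hsC hsC2 hexpP
end

section
/- Let A₁, B₁ be n×n real symmetric positive-definite matrices, E an invertible real matrix, and set A₂ = E A₁ E^T, B₂ = E B₁ E^T. Let E₁ = B₁^{1/2}(B₁^{-1/2} A₁ B₁^{-1/2})^{1/2} B₁^{-1/2} and E₂ = B₂^{1/2}(B₂^{-1/2} A₂ B₂^{-1/2})^{1/2} B₂^{-1/2} be the corresponding parallel-transport matrices. Then E₂ E = E E₁; equivalently, for every symmetric matrix S, E (E₁ S E₁^T) E^T = E₂ (E S E^T) E₂^T, i.e., congruence by E commutes with parallel transport. -/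
/-!
With `N = sB₂⁻¹ E sB₁`, the relation `sB₂² = E sB₁² Eᵀ` says exactly that `N` is orthogonal,
and then `sB₂⁻¹ A₂ sB₂⁻¹ = N (sB₁⁻¹ A₁ sB₁⁻¹) Nᵀ`. Congruence by an orthogonal matrix is
conjugation, so it commutes with the positive square root: `sC₂ = N sC₁ Nᵀ`. Substituting
`sB₂ N = E sB₁` and `Nᵀ sB₂⁻¹ E = sB₁⁻¹` gives `E₂ E = E E₁`.
-/

open Matrix

namespace Matrix

variable {m α : Type*} [Fintype m]

theorem mul_mul_transpose_eq_of_mul_eq [CommSemiring α] {E F₁ F₂ : Matrix m m α}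
    (h : F₂ * E = E * F₁) (S : Matrix m m α) :
    E * (F₁ * S * F₁ᵀ) * Eᵀ = F₂ * (E * S * Eᵀ) * F₂ᵀ := by
  have hT : F₁ᵀ * Eᵀ = Eᵀ * F₂ᵀ := by rw [← transpose_mul, ← transpose_mul, h]
  calc E * (F₁ * S * F₁ᵀ) * Eᵀ = E * F₁ * S * (F₁ᵀ * Eᵀ) := by simp only [Matrix.mul_assoc]
    _ = F₂ * E * S * (Eᵀ * F₂ᵀ) := by rw [h, hT]
    _ = F₂ * (E * S * Eᵀ) * F₂ᵀ := by simp only [Matrix.mul_assoc]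

variable [DecidableEq m]

section CommRing

variable [CommRing α] {P Q E : Matrix m m α}

theorem inv_mul_mul_congr (hP : P.IsSymm) (hQ : Q.IsSymm) (hQu : IsUnit Q.det)
    (A : Matrix m m α) :
    (P⁻¹ * E * Q) * (Q⁻¹ * A * Q⁻¹) * (P⁻¹ * E * Q)ᵀ = P⁻¹ * (E * A * Eᵀ) * P⁻¹ := by
  rw [transpose_mul, transpose_mul, transpose_nonsing_inv, hP.eq, hQ.eq]
  simp only [Matrix.mul_assoc, mul_nonsing_inv_cancel_left Q _ hQu]
  simp only [← Matrix.mul_assoc, nonsing_inv_mul_cancel_right Q _ hQu]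

theorem inv_mul_mul_mul_transpose_eq_one (hP : P.IsSymm) (hQ : Q.IsSymm) (hPu : IsUnit P.det)
    (hQu : IsUnit Q.det) (h : P * P = E * (Q * Q) * Eᵀ) :
    (P⁻¹ * E * Q) * (P⁻¹ * E * Q)ᵀ = 1 := by
  have hQQ : Q⁻¹ * (Q * Q) * Q⁻¹ = 1 := by
    rw [nonsing_inv_mul_cancel_left Q _ hQu, mul_nonsing_inv _ hQu]
  simpa [hQQ, ← h, Matrix.mul_assoc, nonsing_inv_mul_cancel_left P _ hPu, mul_nonsing_inv _ hPu]
    using inv_mul_mul_congr (E := E) hP hQ hQu (Q * Q)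

theorem mul_conj_mul_inv_mul (hPu : IsUnit P.det) (hQu : IsUnit Q.det)
    (hN : (P⁻¹ * E * Q)ᵀ * (P⁻¹ * E * Q) = 1) (C : Matrix m m α) :
    P * ((P⁻¹ * E * Q) * C * (P⁻¹ * E * Q)ᵀ) * P⁻¹ * E = E * (Q * C * Q⁻¹) := by
  set N := P⁻¹ * E * Q
  have hPN : P * N = E * Q := by
    simp only [N, Matrix.mul_assoc, mul_nonsing_inv_cancel_left P _ hPu]
  have hNQ : P⁻¹ * E = N * Q⁻¹ := by
    simp only [N, mul_nonsing_inv_cancel_right Q _ hQu]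
  calc P * (N * C * Nᵀ) * P⁻¹ * E = P * N * C * (Nᵀ * N) * Q⁻¹ := by
        simp only [Matrix.mul_assoc, hNQ]
    _ = E * (Q * C * Q⁻¹) := by rw [hN, hPN, Matrix.mul_one]; simp only [Matrix.mul_assoc]

end CommRing

theorem eq_mul_mul_transpose_of_mul_self_eq {U X Y : Matrix m m ℝ} (hU : Uᵀ * U = 1)
    (hX : X.PosSemidef) (hY : Y.PosSemidef) (h : Y * Y = U * (X * X) * Uᵀ) :
    Y = U * X * Uᵀ := by
  open scoped MatrixOrder in
  have hUXU : (U * X * Uᵀ).PosSemidef := by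
    simpa using hX.mul_mul_conjTranspose_same U
  refine (CFC.sq_eq_sq_iff Y (U * X * Uᵀ) hY.nonneg hUXU.nonneg).mp ?_
  calc Y ^ 2 = U * X * (Uᵀ * U) * X * Uᵀ := by
        rw [pow_two, h, hU, Matrix.mul_one]; simp only [Matrix.mul_assoc]
    _ = (U * X * Uᵀ) ^ 2 := by rw [pow_two]; simp only [Matrix.mul_assoc]

end Matrix

theorem stmt_14_general (n : ℕ) (A₁ B₁ A₂ B₂ E sB₁ sC₁ sB₂ sC₂ : Matrix (Fin n) (Fin n) ℝ)
    (hA₂ : A₂ = E * A₁ * Eᵀ) (hB₂ : B₂ = E * B₁ * Eᵀ)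
    (hsB₁ : sB₁.PosDef) (hsB₁2 : sB₁ * sB₁ = B₁)
    (hsC₁ : sC₁.PosDef) (hsC₁2 : sC₁ * sC₁ = sB₁⁻¹ * A₁ * sB₁⁻¹)
    (hsB₂ : sB₂.PosDef) (hsB₂2 : sB₂ * sB₂ = B₂)
    (hsC₂ : sC₂.PosDef) (hsC₂2 : sC₂ * sC₂ = sB₂⁻¹ * A₂ * sB₂⁻¹) :
    (sB₂ * sC₂ * sB₂⁻¹) * E = E * (sB₁ * sC₁ * sB₁⁻¹) ∧
      ∀ S : Matrix (Fin n) (Fin n) ℝ, S.IsSymm →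
        E * ((sB₁ * sC₁ * sB₁⁻¹) * S * (sB₁ * sC₁ * sB₁⁻¹)ᵀ) * Eᵀ =
          (sB₂ * sC₂ * sB₂⁻¹) * (E * S * Eᵀ) * (sB₂ * sC₂ * sB₂⁻¹)ᵀ := by
  have hsB₁u : IsUnit sB₁.det := hsB₁.det_pos.ne'.isUnit
  have hsB₂u : IsUnit sB₂.det := hsB₂.det_pos.ne'.isUnit
  have hsB₁s : sB₁.IsSymm := hsB₁.isHermitian
  have hsB₂s : sB₂.IsSymm := hsB₂.isHermitian
  have hN : (sB₂⁻¹ * E * sB₁)ᵀ * (sB₂⁻¹ * E * sB₁) = 1 :=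
    mul_eq_one_comm.mp <| inv_mul_mul_mul_transpose_eq_one hsB₂s hsB₁s hsB₂u hsB₁u
      (by rw [hsB₂2, hsB₁2, hB₂])
  have hsC : sC₂ = (sB₂⁻¹ * E * sB₁) * sC₁ * (sB₂⁻¹ * E * sB₁)ᵀ :=
    eq_mul_mul_transpose_of_mul_self_eq hN hsC₁.posSemidef hsC₂.posSemidef
      (by rw [hsC₂2, hsC₁2, inv_mul_mul_congr hsB₂s hsB₁s hsB₁u, hA₂])
  have hmain : (sB₂ * sC₂ * sB₂⁻¹) * E = E * (sB₁ * sC₁ * sB₁⁻¹) := by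
    rw [hsC]; exact mul_conj_mul_inv_mul hsB₂u hsB₁u hN sC₁
  exact ⟨hmain, fun S _ => mul_mul_transpose_eq_of_mul_eq hmain S⟩

/-- Congruence by an invertible `E` commutes with parallel transport:
with `A₂ = E A₁ Eᵀ`, `B₂ = E B₁ Eᵀ` and parallel-transport matrices
`E₁ = B₁^{1/2}(B₁^{-1/2} A₁ B₁^{-1/2})^{1/2} B₁^{-1/2}`,
`E₂ = B₂^{1/2}(B₂^{-1/2} A₂ B₂^{-1/2})^{1/2} B₂^{-1/2}`, one has `E₂ E = E E₁`, and hence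
`E (E₁ S E₁ᵀ) Eᵀ = E₂ (E S Eᵀ) E₂ᵀ` for every symmetric `S`. -/
theorem stmt_14 (n : ℕ) (A₁ B₁ A₂ B₂ E sB₁ sC₁ sB₂ sC₂ : Matrix (Fin n) (Fin n) ℝ)
    (hA₁ : A₁.PosDef) (hB₁ : B₁.PosDef) (hE : E.det ≠ 0)
    (hA₂ : A₂ = E * A₁ * Eᵀ) (hB₂ : B₂ = E * B₁ * Eᵀ)
    (hsB₁ : sB₁.PosDef) (hsB₁2 : sB₁ * sB₁ = B₁)
    (hsC₁ : sC₁.PosDef) (hsC₁2 : sC₁ * sC₁ = sB₁⁻¹ * A₁ * sB₁⁻¹)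
    (hsB₂ : sB₂.PosDef) (hsB₂2 : sB₂ * sB₂ = B₂)
    (hsC₂ : sC₂.PosDef) (hsC₂2 : sC₂ * sC₂ = sB₂⁻¹ * A₂ * sB₂⁻¹) :
    (sB₂ * sC₂ * sB₂⁻¹) * E = E * (sB₁ * sC₁ * sB₁⁻¹) ∧
      ∀ S : Matrix (Fin n) (Fin n) ℝ, S.IsSymm →
        E * ((sB₁ * sC₁ * sB₁⁻¹) * S * (sB₁ * sC₁ * sB₁⁻¹)ᵀ) * Eᵀ =
          (sB₂ * sC₂ * sB₂⁻¹) * (E * S * Eᵀ) * (sB₂ * sC₂ * sB₂⁻¹)ᵀ :=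
  stmt_14_general n A₁ B₁ A₂ B₂ E sB₁ sC₁ sB₂ sC₂ hA₂ hB₂ hsB₁ hsB₁2 hsC₁ hsC₁2 hsB₂ hsB₂2 hsC₂
    hsC₂2
end

section
/- Let A and B be n×n real symmetric positive-definite matrices and suppose there exists t₀ with 0 < t₀ < 1 such that B^{1/2}(B^{-1/2} A B^{-1/2})^{t₀} B^{1/2} = I (the identity lies on the geodesic from B to A). Then A and B commute: A B = B A. -/
open Matrix

/-!
If `s e s = 1` then `s` is invertible with `s⁻¹ = e s = s e`, so `e = (s s)⁻¹`. On the geodesic,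
`s = B^{1/2}` and `e = C^{t₀}` with `C = B^{-1/2} A B^{-1/2}`; since `C^{t₀}` commutes with `C`, its
inverse `B` commutes with `C`, and `B = s s` also commutes with `s`, hence with `A = s C s`.
-/

section Monoid

variable {M : Type*} [Monoid M] {s e : M}

theorem mul_comm_of_mul_mul_eq_one (h : s * e * s = 1) : s * e = e * s :=
  left_inv_eq_right_inv h (by rw [← mul_assoc, h])

theorem Commute.mul_self_of_mul_mul_eq_one {c : M} (h : s * e * s = 1) (hc : Commute e c) :
    Commute (s * s) c := by
  have hss : s * s * e = 1 := by
    rw [mul_assoc, mul_comm_of_mul_mul_eq_one h, ← mul_assoc, h]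
  have hee : e * (s * s) = 1 := by
    rw [← mul_assoc, ← mul_comm_of_mul_mul_eq_one h, h]
  let u : Mˣ := ⟨e, s * s, hee, hss⟩
  exact Commute.units_inv_left (u := u) hc

theorem Commute.mul_self_conj_of_mul_mul_eq_one {c : M} (h : s * e * s = 1) (hc : Commute e c) :
    Commute (s * s) (s * c * s) :=
  have hs : Commute (s * s) s := (Commute.refl s).mul_left (Commute.refl s)
  (hs.mul_right (hc.mul_self_of_mul_mul_eq_one h)).mul_right hs

end Monoid

theorem stmt_16_general (n : ℕ) (A B sB Lc : Matrix (Fin n) (Fin n) ℝ) (t₀ : ℝ)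
    (hsB2 : sB * sB = B)
    (hexpC : NormedSpace.exp Lc = sB⁻¹ * A * sB⁻¹)
    (hgeo : sB * NormedSpace.exp (t₀ • Lc) * sB = 1) :
    A * B = B * A := by
  have hdet : IsUnit sB.det :=
    Matrix.isUnit_det_of_right_inverse (B := NormedSpace.exp (t₀ • Lc) * sB)
      (by rw [← Matrix.mul_assoc, hgeo])
  have hA : sB * NormedSpace.exp Lc * sB = A := by
    rw [hexpC, ← Matrix.mul_assoc, Matrix.nonsing_inv_mul_cancel_right _ _ hdet,
      Matrix.mul_nonsing_inv_cancel_left _ _ hdet]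
  have hcomm := Commute.mul_self_conj_of_mul_mul_eq_one hgeo
    ((Commute.refl Lc).smul_left t₀).exp
  rw [hsB2, hA] at hcomm
  exact hcomm.eq.symm

/-- If the identity lies on the geodesic from `B` to `A`, i.e.
`B^{1/2}(B^{-1/2} A B^{-1/2})^{t₀} B^{1/2} = I` for some `0 < t₀ < 1`
(where `(B^{-1/2} A B^{-1/2})^{t₀} = exp (t₀ • Lc)` with `Lc` the symmetric logarithm of
`B^{-1/2} A B^{-1/2}`), then `A` and `B` commute. -/
theorem stmt_16 (n : ℕ) (A B sB Lc : Matrix (Fin n) (Fin n) ℝ) (t₀ : ℝ)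
    (hA : A.PosDef) (hB : B.PosDef)
    (hsB : sB.PosDef) (hsB2 : sB * sB = B)
    (hLc : Lc.IsSymm) (hexpC : NormedSpace.exp Lc = sB⁻¹ * A * sB⁻¹)
    (ht₀ : 0 < t₀) (ht₁ : t₀ < 1)
    (hgeo : sB * NormedSpace.exp (t₀ • Lc) * sB = 1) :
    A * B = B * A :=
  stmt_16_general n A B sB Lc t₀ hsB2 hexpC hgeo
end
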